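/- Let G = (V, E) be a connected graph with n+1 vertices, edge capacities c : E → ℝ_{≥0}, and let D be a spanning representation mapping some spanning tree to the standard basis of ℝ^n. Then the volume of the zonotope Z = { Σ_{e ∈ E} λ_e c(e) D(e) : λ_e ∈ [0,1] } equals Γ(c) = Σ_{T spanning tree of G} Π_{e ∈ T} c(e), the weighted spanning tree polynomial of G evaluated at the capacities. -/

import Mathlib

open MeasureTheory

namespace CreditNet

variable {V E : Type}

/-- A walk in a multigraph with edge-endpoint maps `fst`, `snd`; edges may be
traversed forwards (`fwd`) or backwards (`bwd`). -/
inductive Walk (fst snd : E → V) : V → V → Type where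
  | nil (v : V) : Walk fst snd v v
  | fwd (e : E) {y : V} (w : Walk fst snd (snd e) y) : Walk fst snd (fst e) y
  | bwd (e : E) {y : V} (w : Walk fst snd (fst e) y) : Walk fst snd (snd e) y

/-- The signed sum of a map `D` along a walk: `+D e` for forward traversal of an
edge, `-D e` for backward traversal. -/
def wsum {n : ℕ} {fst snd : E → V} (D : E → Fin n → ℝ) :
    {x y : V} → Walk fst snd x y → (Fin n → ℝ)
  | _, _, .nil _ => 0
  | _, _, .fwd e w => D e + wsum D w
  | _, _, .bwd e w => (-D e) + wsum D w

/-- One adjacency step: either an edge of `T` joins `u` and `v`, or the extra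
identification relation `R` relates them (in either order). -/
def Step (fst snd : E → V) (T : Finset E) (R : V → V → Prop) (u v : V) : Prop :=
  (∃ e ∈ T, (fst e = u ∧ snd e = v) ∨ (fst e = v ∧ snd e = u)) ∨ R u v ∨ R v u

/-- The graph restricted to edge set `T`, with vertices additionally identified
according to `R`, is connected. -/
def ConnVia (fst snd : E → V) (T : Finset E) (R : V → V → Prop) : Prop :=
  ∀ u v : V, Relation.ReflTransGen (Step fst snd T R) u v

/-- No vertex identifications. -/
def NoRel : V → V → Prop := fun _ _ => False

/-- Identify the vertices `x` and `y`. -/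
def Rid (x y : V) : V → V → Prop := fun u v => u = x ∧ v = y

/-- Identify `x` with `y` and `a` with `b`. -/
def Rid2 (x y a b : V) : V → V → Prop := fun u v => (u = x ∧ v = y) ∨ (u = a ∧ v = b)

/-- `T` is a spanning tree of the graph with vertex identifications `R`:
a minimal connecting edge set. -/
def IsSTree [DecidableEq E] (fst snd : E → V) (R : V → V → Prop) (T : Finset E) : Prop :=
  ConnVia fst snd T R ∧ ∀ e ∈ T, ¬ ConnVia fst snd (T.erase e) R

open Classical in
/-- The weighted spanning-tree generating polynomial
`Γ(c) = Σ_{T spanning tree} Π_{e ∈ T} c e` of the graph with vertex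
identifications `R`. -/
noncomputable def treePoly [Fintype E] (fst snd : E → V) (R : V → V → Prop) (c : E → ℝ) : ℝ :=
  ∑ T ∈ Finset.univ.filter (fun T => IsSTree fst snd R T), ∏ e ∈ T, c e

open Classical in
/-- A spanning representation: signed sums along closed walks vanish, and the
images of the edges of any spanning tree span `ℝ^n`. -/
def IsSpanningRep [Fintype E] {n : ℕ} (fst snd : E → V) (D : E → Fin n → ℝ) : Prop :=
  (∀ (x : V) (w : Walk fst snd x x), wsum D w = 0) ∧
  (∀ T : Finset E, IsSTree fst snd NoRel T →
    Submodule.span ℝ (Set.range fun e : T => D e.1) = (⊤ : Submodule ℝ (Fin n → ℝ)))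

/-- An escrow configuration: nonnegative, the two directions of each edge sum
to the capacity, and zero off the edges. -/
def IsConfig (fst snd : E → V) (c : E → ℝ) (w : V → V → ℝ) : Prop :=
  (∀ u v, 0 ≤ w u v) ∧
  (∀ e, w (fst e) (snd e) + w (snd e) (fst e) = c e) ∧
  (∀ u v, (¬ ∃ e, (fst e = u ∧ snd e = v) ∨ (fst e = v ∧ snd e = u)) → w u v = 0)

/-- The represented score of a configuration: sum over positively-oriented
edges of the escrow owned by the tail, times the edge direction. -/
noncomputable def score [Fintype E] {n : ℕ} (fst snd : E → V) (D : E → Fin n → ℝ)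
    (w : V → V → ℝ) : Fin n → ℝ :=
  ∑ e : E, w (fst e) (snd e) • D e

/-- Pay `k` units from `u` to `v` across the edge `(u,v)`. -/
def payEdge [DecidableEq V] (u v : V) (k : ℝ) (w : V → V → ℝ) : V → V → ℝ :=
  fun a b =>
    if a = u ∧ b = v then w a b - k
    else if a = v ∧ b = u then w a b + k else w a b

/-- Execute a payment of `k` units along each edge of a walk. -/
def exec [DecidableEq V] {fst snd : E → V} (k : ℝ) :
    {x y : V} → Walk fst snd x y → (V → V → ℝ) → (V → V → ℝ)
  | _, _, .nil _, w => w
  | _, _, .fwd e p, w => exec k p (payEdge (fst e) (snd e) k w)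
  | _, _, .bwd e p, w => exec k p (payEdge (snd e) (fst e) k w)

/-- Feasibility of paying `k` units along each edge of a walk in turn. -/
def Feasible [DecidableEq V] {fst snd : E → V} (k : ℝ) :
    {x y : V} → Walk fst snd x y → (V → V → ℝ) → Prop
  | _, _, .nil _, _ => True
  | _, _, .fwd e p, w => k ≤ w (fst e) (snd e) ∧ Feasible k p (payEdge (fst e) (snd e) k w)
  | _, _, .bwd e p, w => k ≤ w (snd e) (fst e) ∧ Feasible k p (payEdge (snd e) (fst e) k w)

/-- The zonotope (Minkowski sum of segments) generated by a family of vectors. -/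
def zonotope {ι : Type} [Fintype ι] {n : ℕ} (g : ι → Fin n → ℝ) : Set (Fin n → ℝ) :=
  { z | ∃ lam : ι → ℝ, (∀ i, lam i ∈ Set.Icc (0:ℝ) 1) ∧ z = ∑ i, lam i • g i }

end CreditNet

/-!
Pulling the capacities out of the determinants, `|det (c e • D e)_{e ∈ S}| =
(∏_{e ∈ S} c e) |det (D e)_{e ∈ S}|`, the theorem follows from three facts.

* Zonotope volume formula: `vol (∑ᵢ [0, gᵢ]) = ∑_{#S = n} |det (gᵢ)_{i ∈ S}|`. By induction on the
  generators: a linear change of coordinates turns the new generator into `e₀`, and slicing along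
  the first coordinate gives `vol (K + [0, e₀]) = vol K + vol (π K)` for convex compact `K`, which
  matches the cofactor expansion of the determinant along the row `e₀`.
* `(D e)_{e ∈ S}` is a basis of `ℝⁿ` iff `S` is a spanning tree. Vanishing of `D` on closed walks
  makes every edge vector a walk sum over any connected edge set, and since `D` maps `T₀` to the
  standard basis, every function on the vertices is the potential of a linear functional `L`,
  `L (D e) = φ (snd e) - φ (fst e)`; taking `φ` the indicator of a component of `S` shows that
  `D e ∈ span (D '' S)` forces the endpoints of `e` to be connected in `S`.
* Unimodularity: the integer span of the edge vectors of any spanning tree is the integer span of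
  all edge vectors, which is `ℤⁿ` by the same walk-sum argument applied to `T₀`; hence every tree
  basis has `|det| = 1`.
-/

namespace CreditNet

section AbsDet

variable {ι : Type*} {n : ℕ}

/-- `|det|` of the vectors `g i`, `i ∈ S`, in some order; `0` unless `#S = n`. -/
noncomputable def absDet (g : ι → Fin n → ℝ) (S : Finset ι) : ℝ :=
  if h : S.card = n then |(Matrix.of fun j => g (S.equivFin.symm (Fin.cast h.symm j))).det|
  else 0

lemma absDet_of_card_ne {g : ι → Fin n → ℝ} {S : Finset ι} (h : S.card ≠ n) : absDet g S = 0 :=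
  dif_neg h

lemma absDet_map_univ (g : ι → Fin n → ℝ) (f : Fin n ↪ ι) :
    absDet g (Finset.univ.map f) = |(Matrix.of fun j => g (f j)).det| := by
  have h : (Finset.univ.map f).card = n := by simp
  rw [absDet, dif_pos h]
  set e : Fin n ≃ Finset.univ.map f := (finCongr h.symm).trans (Finset.univ.map f).equivFin.symm
  have hσ : Function.Injective fun j => e.symm ⟨f j, Finset.mem_map_of_mem f (Finset.mem_univ j)⟩ :=
    fun j j' hjj' => f.injective (congrArg Subtype.val (e.symm.injective hjj'))
  let σ : Fin n ≃ Fin n := Equiv.ofBijective _ (Finite.injective_iff_bijective.mp hσ)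
  have hM : (Matrix.of fun j => g (f j))
      = (Matrix.of fun j => g (e j)).submatrix σ (Equiv.refl _) := by
    ext j k
    simp [σ]
  rw [hM, Matrix.abs_det_submatrix_equiv_equiv]
  rfl

lemma exists_map_univ_eq {S : Finset ι} (h : S.card = n) :
    ∃ f : Fin n ↪ ι, Finset.univ.map f = S :=
  Function.Embedding.exists_of_card_eq_finset (by simpa using h.symm)

lemma absDet_smul (c : ι → ℝ) (hc : ∀ i, 0 ≤ c i) (g : ι → Fin n → ℝ) (S : Finset ι) :
    absDet (fun i => c i • g i) S = (∏ i ∈ S, c i) * absDet g S := by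
  by_cases h : S.card = n
  · obtain ⟨f, rfl⟩ := exists_map_univ_eq h
    rw [absDet_map_univ, absDet_map_univ, Finset.prod_map,
      ← abs_of_nonneg (Finset.prod_nonneg fun j _ => hc (f j)), ← abs_mul, ← Matrix.det_mul_column]
    rfl
  · simp [absDet_of_card_ne h]

lemma absDet_linearMap (T : (Fin n → ℝ) →ₗ[ℝ] Fin n → ℝ) (g : ι → Fin n → ℝ) (S : Finset ι) :
    absDet (fun i => T (g i)) S = |LinearMap.det T| * absDet g S := by
  by_cases h : S.card = n
  · obtain ⟨f, rfl⟩ := exists_map_univ_eq h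
    rw [absDet_map_univ, absDet_map_univ, ← abs_mul, ← Pi.basisFun_det_apply,
      ← Pi.basisFun_det_apply, ← Module.Basis.det_comp]
    rfl
  · simp [absDet_of_card_ne h]

lemma absDet_eq_zero_of_mem {g : ι → Fin n → ℝ} {S : Finset ι} {a : ι} (ha : a ∈ S)
    (hga : g a = 0) : absDet g S = 0 := by
  by_cases h : S.card = n
  · obtain ⟨f, rfl⟩ := exists_map_univ_eq h
    obtain ⟨j, -, rfl⟩ := Finset.mem_map.mp ha
    rw [absDet_map_univ, Matrix.det_eq_zero_of_row_eq_zero j (by simp [hga]), abs_zero]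
  · exact absDet_of_card_ne h

lemma absDet_ne_zero_iff {g : ι → Fin n → ℝ} {S : Finset ι} (h : S.card = n) :
    absDet g S ≠ 0 ↔ LinearIndepOn ℝ g (S : Set ι) ∧ Submodule.span ℝ (g '' S) = ⊤ := by
  obtain ⟨f, rfl⟩ := exists_map_univ_eq h
  rw [absDet_map_univ, abs_ne_zero, ← Pi.basisFun_det_apply, ← isUnit_iff_ne_zero,
    ← Module.Basis.is_basis_iff_det, Finset.coe_map, Finset.coe_univ, Set.image_univ,
    ← Set.range_comp, linearIndepOn_range_iff f.injective]
  rfl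

lemma abs_det_intCast_eq_one {m : Type*} [Fintype m] [DecidableEq m] {A B : Matrix m m ℤ}
    (h : B * A = 1) : |(A.map ((↑) : ℤ → ℝ)).det| = 1 := by
  rw [← Int.cast_det]
  rcases Int.isUnit_iff.mp (Matrix.isUnit_det_of_left_inverse h) with h1 | h1 <;> simp [h1]

lemma absDet_eq_one_of_span_int_eq {g : ι → Fin n → ℝ} {S : Finset ι} (h : S.card = n)
    (hspan : Submodule.span ℤ (g '' S) = Submodule.span ℤ (Set.range fun i => Pi.single i 1)) :
    absDet g S = 1 := by
  obtain ⟨f, rfl⟩ := exists_map_univ_eq h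
  rw [Finset.coe_map, Finset.coe_univ, Set.image_univ, ← Set.range_comp] at hspan
  have hrow : ∀ j, ∃ a : Fin n → ℤ, ∀ k, g (f j) k = a k := by
    intro j
    have : g (f j) ∈ Submodule.span ℤ (Set.range fun i => Pi.single i 1) :=
      hspan ▸ Submodule.subset_span ⟨j, rfl⟩
    obtain ⟨a, ha⟩ := (Submodule.mem_span_range_iff_exists_fun ℤ).mp this
    exact ⟨a, fun k => by simp [← ha, Finset.sum_apply, Pi.single_apply]⟩
  have hcol : ∀ k, ∃ b : Fin n → ℤ, ∑ j, b j • g (f j) = Pi.single k 1 := by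
    intro k
    have : Pi.single k 1 ∈ Submodule.span ℤ (Set.range (g ∘ f)) :=
      hspan ▸ Submodule.subset_span ⟨k, rfl⟩
    exact (Submodule.mem_span_range_iff_exists_fun ℤ).mp this
  choose A hA using hrow
  choose B hB using hcol
  have hM : (Matrix.of fun j => g (f j)) = (Matrix.of A).map ((↑) : ℤ → ℝ) := by
    ext j k
    simp [hA]
  have hBA : Matrix.of B * Matrix.of A = 1 := by
    ext k l
    apply Int.cast_injective (α := ℝ)
    have := congrFun (hB k) l
    rw [Finset.sum_apply] at this
    simp only [Pi.smul_apply, zsmul_eq_mul, hA] at this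
    simp [Matrix.mul_apply, Matrix.one_apply, this, Pi.single_apply, eq_comm]
  rw [absDet_map_univ, hM]
  exact abs_det_intCast_eq_one hBA

lemma absDet_insert_of_eq_single [DecidableEq ι] {k : ℕ} {g : ι → Fin (k + 1) → ℝ} {a : ι}
    {S : Finset ι} (ha : a ∉ S) (hga : g a = Pi.single 0 1) :
    absDet g (insert a S) = absDet (fun i => Fin.tail (g i)) S := by
  by_cases h : S.card = k
  · obtain ⟨f, rfl⟩ := exists_map_univ_eq h
    have ha' : a ∉ Set.range f := by simpa using ha
    have hins : insert a (Finset.univ.map f) = Finset.univ.map (Fin.Embedding.cons f ha') := by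
      ext x
      simp [Fin.exists_fin_succ, eq_comm]
    rw [hins, absDet_map_univ, absDet_map_univ, Matrix.det_succ_row_zero,
      Fintype.sum_eq_single 0 fun j hj => by simp [hga, hj.symm]]
    simp [hga]
    rfl
  · rw [absDet_of_card_ne h, absDet_of_card_ne (by rw [Finset.card_insert_of_notMem ha]; omega)]

end AbsDet

open MeasureTheory
open scoped Pointwise

lemma isCompact_segment {F : Type*} [AddCommGroup F] [Module ℝ F] [TopologicalSpace F]
    [IsTopologicalAddGroup F] [ContinuousSMul ℝ F] (x y : F) : IsCompact (segment ℝ x y) := by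
  rw [segment_eq_image_lineMap]
  exact isCompact_Icc.image AffineMap.lineMap_continuous

section Slice

variable {k : ℕ}

def slice (s : Set (Fin (k + 1) → ℝ)) (y : Fin k → ℝ) : Set ℝ :=
  (fun x : ℝ => (Fin.cons x y : Fin (k + 1) → ℝ)) ⁻¹' s

lemma cons_add_smul_single (x s : ℝ) (y : Fin k → ℝ) :
    (Fin.cons x y : Fin (k + 1) → ℝ) + s • Pi.single 0 1 = Fin.cons (x + s) y := by
  ext j
  cases j using Fin.cases <;> simp

lemma piFinSuccAbove_zero_symm_apply (x : ℝ) (y : Fin k → ℝ) :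
    (MeasurableEquiv.piFinSuccAbove (fun _ : Fin (k + 1) => ℝ) 0).symm (x, y) = Fin.cons x y := by
  simp [MeasurableEquiv.piFinSuccAbove_symm_apply, Fin.insertNthEquiv, Fin.insertNth_zero']

lemma volume_eq_lintegral_volume_slice {s : Set (Fin (k + 1) → ℝ)} (hs : MeasurableSet s) :
    volume s = ∫⁻ y, volume (slice s y) := by
  have hF := (volume_preserving_piFinSuccAbove (fun _ : Fin (k + 1) => ℝ) 0).symm
  rw [← hF.measure_preimage hs.nullMeasurableSet, Measure.volume_eq_prod,
    Measure.prod_apply_symm (hF.measurable hs)]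
  simp only [Set.preimage_preimage, piFinSuccAbove_zero_symm_apply, slice]

lemma measurable_volume_slice {s : Set (Fin (k + 1) → ℝ)} (hs : MeasurableSet s) :
    Measurable fun y => volume (slice s y) := by
  have hF := (volume_preserving_piFinSuccAbove (fun _ : Fin (k + 1) => ℝ) 0).symm
  simpa only [Set.preimage_preimage, piFinSuccAbove_zero_symm_apply, slice] using
    measurable_measure_prodMk_right (μ := (volume : Measure ℝ)) (hF.measurable hs)

lemma cons_eq_add_toSpanSingleton (y : Fin k → ℝ) :
    (fun x : ℝ => (Fin.cons x y : Fin (k + 1) → ℝ))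
      = fun x => Fin.cons 0 y + LinearMap.toSpanSingleton ℝ _ (Pi.single 0 1) x := by
  ext1 x
  rw [LinearMap.toSpanSingleton_apply, cons_add_smul_single, zero_add]

lemma convex_slice {K : Set (Fin (k + 1) → ℝ)} (hK : Convex ℝ K) (y : Fin k → ℝ) :
    Convex ℝ (slice K y) := by
  rw [slice, cons_eq_add_toSpanSingleton]
  exact (hK.translate_preimage_right _).linear_preimage _

lemma isCompact_slice {K : Set (Fin (k + 1) → ℝ)} (hK : IsCompact K) (y : Fin k → ℝ) :
    IsCompact (slice K y) := by
  refine (hK.image (continuous_apply 0)).of_isClosed_subset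
    (hK.isClosed.preimage ?_) fun x hx => ⟨_, hx, by simp⟩
  rw [cons_eq_add_toSpanSingleton]
  fun_prop

lemma slice_segment_single_add (K : Set (Fin (k + 1) → ℝ)) (y : Fin k → ℝ) :
    slice (segment ℝ 0 (Pi.single 0 1) + K) y = slice K y + Set.Icc 0 1 := by
  ext x
  simp only [slice, Set.mem_preimage, Set.mem_add, segment_eq_image', sub_zero, zero_add]
  constructor
  · rintro ⟨_, ⟨s, hs, rfl⟩, z, hz, hsz⟩
    refine ⟨x - s, ?_, s, hs, sub_add_cancel x s⟩
    convert hz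
    apply add_left_injective (s • Pi.single 0 1 : Fin (k + 1) → ℝ)
    dsimp only at hsz ⊢
    rw [cons_add_smul_single, sub_add_cancel, ← hsz]
    exact add_comm _ _
  · rintro ⟨x', hx', s, hs, rfl⟩
    exact ⟨_, ⟨s, hs, rfl⟩, _, hx', (add_comm _ _).trans (cons_add_smul_single x' s y)⟩

lemma slice_nonempty_iff {K : Set (Fin (k + 1) → ℝ)} {y : Fin k → ℝ} :
    (slice K y).Nonempty ↔ y ∈ Fin.tail '' K := by
  constructor
  · rintro ⟨x, hx⟩
    exact ⟨_, hx, by simp⟩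
  · rintro ⟨z, hz, rfl⟩
    exact ⟨z 0, by simpa [slice] using hz⟩

lemma volume_add_Icc_zero_one {K : Set ℝ} (hconv : Convex ℝ K) (hcomp : IsCompact K)
    (hne : K.Nonempty) : volume (K + Set.Icc 0 1) = volume K + 1 := by
  have hab : sInf K ≤ sSup K := csInf_le_csSup hne hcomp.bddBelow hcomp.bddAbove
  rw [eq_Icc_of_connected_compact ⟨hne, hconv.isPreconnected⟩ hcomp,
    Set.Icc_add_Icc hab zero_le_one, Real.volume_Icc, Real.volume_Icc, add_zero,
    add_sub_right_comm, ENNReal.ofReal_add (sub_nonneg.mpr hab) zero_le_one, ENNReal.ofReal_one]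

lemma volume_segment_single_add {K : Set (Fin (k + 1) → ℝ)} (hconv : Convex ℝ K)
    (hcomp : IsCompact K) :
    volume (segment ℝ 0 (Pi.single 0 1) + K) = volume K + volume (Fin.tail '' K) := by
  have hslice : ∀ y, volume (slice (segment ℝ 0 (Pi.single 0 1) + K) y)
      = volume (slice K y) + (Fin.tail '' K).indicator 1 y := by
    intro y
    rw [slice_segment_single_add]
    by_cases h : (slice K y).Nonempty
    · rw [volume_add_Icc_zero_one (convex_slice hconv y) (isCompact_slice hcomp y) h,
        Set.indicator_of_mem (slice_nonempty_iff.mp h), Pi.one_apply]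
    · rw [Set.not_nonempty_iff_eq_empty.mp h,
        Set.indicator_of_notMem fun h' => h (slice_nonempty_iff.mpr h')]
      simp
  rw [volume_eq_lintegral_volume_slice ((isCompact_segment _ _).add hcomp).measurableSet,
    volume_eq_lintegral_volume_slice hcomp.measurableSet,
    ← lintegral_indicator_one (hcomp.image (by fun_prop)).measurableSet,
    ← lintegral_add_left (measurable_volume_slice hcomp.measurableSet)]
  exact lintegral_congr hslice

end Slice

lemma sum_powersetCard_succ_insert {ι M : Type*} [DecidableEq ι] [AddCommMonoid M]
    {a : ι} {A : Finset ι} (ha : a ∉ A) (k : ℕ) (f : Finset ι → M) :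
    ∑ S ∈ (insert a A).powersetCard (k + 1), f S
      = ∑ S ∈ A.powersetCard (k + 1), f S + ∑ S ∈ A.powersetCard k, f (insert a S) := by
  have hnot : ∀ S ∈ A.powersetCard k, a ∉ S := fun S hS haS =>
    ha ((Finset.mem_powersetCard.mp hS).1 haS)
  rw [Finset.powersetCard_succ_insert ha, Finset.sum_union, Finset.sum_image]
  · intro S hS S' hS' h
    rw [← Finset.erase_insert (hnot S hS), h, Finset.erase_insert (hnot S' hS')]
  · refine Finset.disjoint_left.mpr fun S hS hS' => ?_
    obtain ⟨S', hS', rfl⟩ := Finset.mem_image.mp hS'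
    exact ha ((Finset.mem_powersetCard.mp hS).1 (Finset.mem_insert_self a S'))

section SumSegment

variable {ι : Type*} {n : ℕ}

lemma convex_sum_segment (A : Finset ι) (g : ι → Fin n → ℝ) :
    Convex ℝ (∑ i ∈ A, segment ℝ 0 (g i)) :=
  Finset.sum_induction _ _ (fun _ _ => Convex.add) (convex_singleton 0)
    fun _ _ => convex_segment _ _

lemma isCompact_sum_segment (A : Finset ι) (g : ι → Fin n → ℝ) :
    IsCompact (∑ i ∈ A, segment ℝ 0 (g i)) :=
  Finset.sum_induction _ _ (fun _ _ => IsCompact.add) isCompact_singleton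
    fun _ _ => isCompact_segment _ _

lemma image_sum_segment {m : ℕ} (L : (Fin n → ℝ) →ₗ[ℝ] Fin m → ℝ) (A : Finset ι)
    (g : ι → Fin n → ℝ) :
    L '' ∑ i ∈ A, segment ℝ 0 (g i) = ∑ i ∈ A, segment ℝ 0 (L (g i)) := by
  rw [Set.image_finsetSum]
  refine Finset.sum_congr rfl fun i _ => ?_
  simpa using image_segment ℝ L.toAffineMap 0 (g i)

lemma volume_image_sum_segment (T : (Fin n → ℝ) →ₗ[ℝ] Fin n → ℝ) (A : Finset ι)
    (g : ι → Fin n → ℝ) :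
    volume (∑ i ∈ A, segment ℝ 0 (T (g i)))
      = ENNReal.ofReal |LinearMap.det T| * volume (∑ i ∈ A, segment ℝ 0 (g i)) := by
  rw [← image_sum_segment, Measure.addHaar_image_linearMap]

lemma volume_sum_segment_insert_of_eq_single [DecidableEq ι] {k : ℕ} {g : ι → Fin (k + 1) → ℝ}
    {a : ι} {A : Finset ι} (ha : a ∉ A) (hga : g a = Pi.single 0 1) :
    volume (∑ i ∈ insert a A, segment ℝ 0 (g i))
      = volume (∑ i ∈ A, segment ℝ 0 (g i)) + volume (∑ i ∈ A, segment ℝ 0 (Fin.tail (g i))) := by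
  rw [Finset.sum_insert ha, hga,
    volume_segment_single_add (convex_sum_segment A g) (isCompact_sum_segment A g)]
  congr 2
  exact image_sum_segment (LinearMap.funLeft ℝ ℝ Fin.succ) A g

lemma sum_absDet_insert_of_eq_single [DecidableEq ι] {k : ℕ} {g : ι → Fin (k + 1) → ℝ}
    {a : ι} {A : Finset ι} (ha : a ∉ A) (hga : g a = Pi.single 0 1) :
    ∑ S ∈ (insert a A).powersetCard (k + 1), ENNReal.ofReal (absDet g S)
      = ∑ S ∈ A.powersetCard (k + 1), ENNReal.ofReal (absDet g S)
        + ∑ S ∈ A.powersetCard k, ENNReal.ofReal (absDet (fun i => Fin.tail (g i)) S) := by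
  rw [sum_powersetCard_succ_insert ha]
  congr 1
  refine Finset.sum_congr rfl fun S hS => ?_
  rw [absDet_insert_of_eq_single (fun haS => ha ((Finset.mem_powersetCard.mp hS).1 haS)) hga]

lemma volume_sum_segment_of_dim_zero (A : Finset ι) (g : ι → Fin 0 → ℝ) :
    volume (∑ i ∈ A, segment ℝ 0 (g i)) = ∑ S ∈ A.powersetCard 0, ENNReal.ofReal (absDet g S) := by
  have hne : (∑ i ∈ A, segment ℝ 0 (g i)).Nonempty :=
    Finset.sum_induction _ _ (fun _ _ => Set.Nonempty.add) Set.zero_nonempty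
      fun i _ => ⟨0, left_mem_segment ℝ 0 (g i)⟩
  rw [hne.eq_univ, ← Set.pi_univ, volume_pi_pi]
  simp [absDet]

theorem volume_sum_segment [DecidableEq ι] (A : Finset ι) :
    ∀ {n : ℕ} (g : ι → Fin n → ℝ),
      volume (∑ i ∈ A, segment ℝ 0 (g i))
        = ∑ S ∈ A.powersetCard n, ENNReal.ofReal (absDet g S) := by
  induction A using Finset.induction_on with
  | empty =>
    rintro (_ | k) g
    · exact volume_sum_segment_of_dim_zero ∅ g
    · rw [Finset.powersetCard_eq_empty.mpr (Nat.succ_pos k)]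
      simp [← Set.singleton_zero]
  | @insert a A ha ih =>
    rintro (_ | k) g
    · exact volume_sum_segment_of_dim_zero _ g
    by_cases hga : g a = 0
    · rw [Finset.sum_insert ha, hga, segment_same, Set.singleton_zero, zero_add, ih,
        sum_powersetCard_succ_insert ha]
      simp [absDet_eq_zero_of_mem (Finset.mem_insert_self a _) hga]
    obtain ⟨T, hT⟩ := SeparatingDual.exists_continuousLinearEquiv_apply_eq (R := ℝ) hga
      (Pi.single_ne_zero_iff.mpr one_ne_zero : (Pi.single 0 1 : Fin (k + 1) → ℝ) ≠ 0)
    let L : (Fin (k + 1) → ℝ) →ₗ[ℝ] Fin (k + 1) → ℝ := T.toLinearEquiv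
    have hLa : L (g a) = Pi.single 0 1 := hT
    have hL : ENNReal.ofReal |LinearMap.det L| ≠ 0 := by
      simpa using T.toLinearEquiv.isUnit_det'.ne_zero
    refine (ENNReal.mul_right_inj hL ENNReal.ofReal_ne_top).mp ?_
    rw [← volume_image_sum_segment, volume_sum_segment_insert_of_eq_single ha hLa, ih, ih,
      ← sum_absDet_insert_of_eq_single ha hLa, Finset.mul_sum]
    refine Finset.sum_congr rfl fun S _ => ?_
    rw [absDet_linearMap, ENNReal.ofReal_mul (abs_nonneg _)]

end SumSegment

lemma zonotope_eq_sum_segment {ι : Type} [Fintype ι] {n : ℕ} (g : ι → Fin n → ℝ) :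
    zonotope g = ∑ i, segment ℝ 0 (g i) := by
  ext z
  rw [Set.mem_finsetSum]
  simp only [segment_eq_image', sub_zero, zero_add, Set.mem_image]
  constructor
  · rintro ⟨lam, hlam, rfl⟩
    exact ⟨fun i => lam i • g i, fun {i} _ => ⟨lam i, hlam i, rfl⟩, rfl⟩
  · rintro ⟨v, hv, rfl⟩
    choose lam hlam hv using fun i => hv (Finset.mem_univ i)
    exact ⟨lam, hlam, Finset.sum_congr rfl fun i _ => (hv i).symm⟩

section Graph

variable {V E : Type} {fst snd : E → V}

namespace Walk

def append : {x y z : V} → Walk fst snd x y → Walk fst snd y z → Walk fst snd x z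
  | _, _, _, .nil _, q => q
  | _, _, _, .fwd e p, q => .fwd e (p.append q)
  | _, _, _, .bwd e p, q => .bwd e (p.append q)

def EdgesIn (S : Finset E) : {x y : V} → Walk fst snd x y → Prop
  | _, _, .nil _ => True
  | _, _, .fwd e p => e ∈ S ∧ p.EdgesIn S
  | _, _, .bwd e p => e ∈ S ∧ p.EdgesIn S

lemma EdgesIn.append {S : Finset E} : ∀ {x y z : V} {p : Walk fst snd x y} {q : Walk fst snd y z},
    p.EdgesIn S → q.EdgesIn S → (p.append q).EdgesIn S
  | _, _, _, .nil _, _, _, hq => hq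
  | _, _, _, .fwd _ _, _, hp, hq => ⟨hp.1, hp.2.append hq⟩
  | _, _, _, .bwd _ _, _, hp, hq => ⟨hp.1, hp.2.append hq⟩

end Walk

instance (S : Finset E) : Std.Symm (Step fst snd S NoRel) where
  symm := by
    rintro u v (⟨e, he, h⟩ | h | h)
    · exact Or.inl ⟨e, he, h.symm⟩
    · exact absurd h id
    · exact absurd h id

lemma exists_walk_edgesIn {S : Finset E} {u v : V}
    (h : Relation.ReflTransGen (Step fst snd S NoRel) u v) :
    ∃ p : Walk fst snd u v, p.EdgesIn S := by
  induction h with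
  | refl => exact ⟨.nil u, trivial⟩
  | tail _ hstep ih =>
    obtain ⟨p, hp⟩ := ih
    rcases hstep with ⟨e, he, ⟨rfl, rfl⟩ | ⟨rfl, rfl⟩⟩ | h | h
    · exact ⟨p.append (.fwd e (.nil _)), hp.append ⟨he, trivial⟩⟩
    · exact ⟨p.append (.bwd e (.nil _)), hp.append ⟨he, trivial⟩⟩
    · exact absurd h id
    · exact absurd h id

lemma ConnVia.erase [DecidableEq E] {S : Finset E} {e : E} (hS : ConnVia fst snd S NoRel)
    (he : Relation.ReflTransGen (Step fst snd (S.erase e) NoRel) (fst e) (snd e)) :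
    ConnVia fst snd (S.erase e) NoRel := by
  intro u v
  refine (hS u v).lift' id fun a b hab => ?_
  rcases hab with ⟨f, hf, hfab⟩ | h | h
  · by_cases hfe : f = e
    · subst hfe
      rcases hfab with ⟨rfl, rfl⟩ | ⟨rfl, rfl⟩
      exacts [he, Std.Symm.symm _ _ he]
    · exact .single (Or.inl ⟨f, Finset.mem_erase.mpr ⟨hfe, hf⟩, hfab⟩)
  · exact absurd h id
  · exact absurd h id

variable {n : ℕ} {D : E → Fin n → ℝ}

lemma wsum_append : ∀ {x y z : V} (p : Walk fst snd x y) (q : Walk fst snd y z),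
    wsum D (p.append q) = wsum D p + wsum D q
  | _, _, _, .nil _, _ => by simp [Walk.append, wsum]
  | _, _, _, .fwd _ p, q => by simp [Walk.append, wsum, wsum_append p q, add_assoc]
  | _, _, _, .bwd _ p, q => by simp [Walk.append, wsum, wsum_append p q, add_assoc]

lemma eq_wsum_of_closed (hD : ∀ (x : V) (w : Walk fst snd x x), wsum D w = 0) (f : E)
    (p : Walk fst snd (fst f) (snd f)) : D f = wsum D p := by
  have h := hD _ (p.append (.bwd f (.nil _)))
  rw [wsum_append, wsum, wsum, add_zero] at h
  exact (add_neg_eq_zero.mp h).symm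

lemma wsum_mem_span (R : Type*) [Ring R] [Module R (Fin n → ℝ)] {S : Finset E} :
    ∀ {x y : V} {p : Walk fst snd x y}, p.EdgesIn S → wsum D p ∈ Submodule.span R (D '' S)
  | _, _, .nil _, _ => zero_mem _
  | _, _, .fwd e _, h =>
      add_mem (Submodule.subset_span ⟨e, h.1, rfl⟩) (wsum_mem_span R h.2)
  | _, _, .bwd e _, h =>
      add_mem (neg_mem (Submodule.subset_span ⟨e, h.1, rfl⟩)) (wsum_mem_span R h.2)

lemma map_wsum_of_potential {S : Finset E} (L : (Fin n → ℝ) →ₗ[ℝ] ℝ) (φ : V → ℝ)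
    (h : ∀ e ∈ S, L (D e) = φ (snd e) - φ (fst e)) :
    ∀ {x y : V} {p : Walk fst snd x y}, p.EdgesIn S → L (wsum D p) = φ y - φ x
  | _, _, .nil _, _ => by simp [wsum]
  | _, _, .fwd e _, hp => by
      rw [wsum, map_add, h e hp.1, map_wsum_of_potential L φ h hp.2]; ring
  | _, _, .bwd e _, hp => by
      rw [wsum, map_add, map_neg, h e hp.1, map_wsum_of_potential L φ h hp.2]; ring

section ClosedWalks

variable (hD : ∀ (x : V) (w : Walk fst snd x x), wsum D w = 0)
include hD

lemma mem_span_image_of_reflTransGen (R : Type*) [Ring R] [Module R (Fin n → ℝ)]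
    {S : Finset E} {f : E}
    (h : Relation.ReflTransGen (Step fst snd S NoRel) (fst f) (snd f)) :
    D f ∈ Submodule.span R (D '' S) := by
  obtain ⟨p, hp⟩ := exists_walk_edgesIn h
  rw [eq_wsum_of_closed hD f p]
  exact wsum_mem_span R hp

lemma span_image_eq_span_range (R : Type*) [Ring R] [Module R (Fin n → ℝ)]
    {S : Finset E} (hS : ConnVia fst snd S NoRel) :
    Submodule.span R (D '' S) = Submodule.span R (Set.range D) :=
  le_antisymm (Submodule.span_mono (Set.image_subset_range _ _)) <|
    Submodule.span_le.mpr <| Set.range_subset_iff.mpr fun _ =>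
      mem_span_image_of_reflTransGen hD R (hS _ _)

end ClosedWalks

lemma span_range_eq_top {t : Fin n → E} (hbasis : ∀ i, D (t i) = Pi.single i 1) :
    Submodule.span ℝ (Set.range D) = ⊤ := by
  rw [eq_top_iff, ← (Pi.basisFun ℝ (Fin n)).span_eq]
  refine Submodule.span_mono (Set.range_subset_iff.mpr fun i => ⟨t i, ?_⟩)
  rw [hbasis, Pi.basisFun_apply]

lemma treePoly_eq_sum_filter [Fintype E] [DecidableEq E] (R : V → V → Prop)
    [DecidablePred (IsSTree fst snd R)] (c : E → ℝ) :
    treePoly fst snd R c = ∑ T ∈ Finset.univ.filter (IsSTree fst snd R), ∏ e ∈ T, c e := by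
  unfold treePoly
  congr!

section SpanningRep

variable {T0 : Finset E} {t : Fin n → E}
  (hD : ∀ (x : V) (w : Walk fst snd x x), wsum D w = 0) (hT0 : ConnVia fst snd T0 NoRel)
  (hTt : ∀ e ∈ T0, ∃ i, t i = e) (hbasis : ∀ i, D (t i) = Pi.single i 1)
include hD hT0 hTt hbasis

lemma span_int_range_eq_span_single :
    Submodule.span ℤ (Set.range D) = Submodule.span ℤ (Set.range fun i => Pi.single i 1) := by
  refine le_antisymm ?_ (Submodule.span_mono ?_)
  · rw [← span_image_eq_span_range hD ℤ hT0]
    refine Submodule.span_mono ?_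
    rintro _ ⟨e, he, rfl⟩
    obtain ⟨i, rfl⟩ := hTt e he
    exact ⟨i, (hbasis i).symm⟩
  · rintro _ ⟨i, rfl⟩
    exact ⟨t i, hbasis i⟩

lemma exists_linearMap_potential (φ : V → ℝ) :
    ∃ L : (Fin n → ℝ) →ₗ[ℝ] ℝ, ∀ f, L (D f) = φ (snd f) - φ (fst f) := by
  set L : (Fin n → ℝ) →ₗ[ℝ] ℝ :=
    ∑ i, (φ (snd (t i)) - φ (fst (t i))) • LinearMap.proj i
  have hT0L : ∀ e ∈ T0, L (D e) = φ (snd e) - φ (fst e) := by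
    rintro _ he
    obtain ⟨i, rfl⟩ := hTt _ he
    simp [L, hbasis, Pi.single_apply]
  refine ⟨L, fun f => ?_⟩
  obtain ⟨p, hp⟩ := exists_walk_edgesIn (hT0 (fst f) (snd f))
  rw [eq_wsum_of_closed hD f p]
  exact map_wsum_of_potential L φ hT0L hp

lemma reflTransGen_of_mem_span {A : Finset E} {e : E} (he : D e ∈ Submodule.span ℝ (D '' A)) :
    Relation.ReflTransGen (Step fst snd A NoRel) (fst e) (snd e) := by
  classical
  by_contra hconn
  let φ : V → ℝ := fun v => if Relation.ReflTransGen (Step fst snd A NoRel) (fst e) v then 1 else 0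
  obtain ⟨L, hL⟩ := exists_linearMap_potential hD hT0 hTt hbasis φ
  have hker : Submodule.span ℝ (D '' A) ≤ LinearMap.ker L := by
    rw [Submodule.span_le]
    rintro _ ⟨f, hf, rfl⟩
    have hstep : Step fst snd A NoRel (fst f) (snd f) := Or.inl ⟨f, hf, Or.inl ⟨rfl, rfl⟩⟩
    have : φ (fst f) = φ (snd f) :=
      if_congr ⟨fun h => h.tail hstep, fun h => h.tail (Std.Symm.symm _ _ hstep)⟩ rfl rfl
    simp [hL, this]
  have := hL e
  rw [hker he, eq_comm] at this
  simp [φ, hconn, Relation.ReflTransGen.refl] at this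

lemma connVia_of_span_eq_top {A : Finset E} (hA : Submodule.span ℝ (D '' A) = ⊤) :
    ConnVia fst snd A NoRel := by
  intro u v
  refine (hT0 u v).lift' id fun a b hab => ?_
  rcases hab with ⟨f, -, ⟨rfl, rfl⟩ | ⟨rfl, rfl⟩⟩ | h | h
  · exact reflTransGen_of_mem_span hD hT0 hTt hbasis (hA ▸ Submodule.mem_top)
  · exact Std.Symm.symm _ _ (reflTransGen_of_mem_span hD hT0 hTt hbasis (hA ▸ Submodule.mem_top))
  · exact absurd h id
  · exact absurd h id

lemma isSTree_iff_linearIndepOn_and_span_eq_top [DecidableEq E] (S : Finset E) :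
    IsSTree fst snd NoRel S ↔ LinearIndepOn ℝ D (S : Set E) ∧ Submodule.span ℝ (D '' S) = ⊤ := by
  constructor
  · rintro ⟨hS, hmin⟩
    refine ⟨linearIndepOn_iff_notMem_span.mpr fun e he hspan => hmin e he ?_,
      (span_image_eq_span_range hD ℝ hS).trans (span_range_eq_top hbasis)⟩
    rw [← Finset.coe_erase] at hspan
    exact hS.erase (reflTransGen_of_mem_span hD hT0 hTt hbasis hspan)
  · rintro ⟨hind, hspan⟩
    refine ⟨connVia_of_span_eq_top hD hT0 hTt hbasis hspan, fun e he hconn => ?_⟩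
    have : D e ∈ Submodule.span ℝ (D '' (S.erase e)) :=
      span_image_eq_span_range hD ℝ hconn ▸ Submodule.subset_span ⟨e, rfl⟩
    rw [Finset.coe_erase] at this
    exact hind.notMem_span he this

lemma card_of_isSTree [DecidableEq E] {S : Finset E} (hS : IsSTree fst snd NoRel S) :
    S.card = n := by
  obtain ⟨hind, hspan⟩ := (isSTree_iff_linearIndepOn_and_span_eq_top hD hT0 hTt hbasis S).mp hS
  have := finrank_span_eq_card hind
  rw [← Set.image_eq_range, hspan, finrank_top, Module.finrank_fin_fun] at this
  simpa using this.symm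

lemma absDet_eq_one_of_isSTree [DecidableEq E] {S : Finset E} (hS : IsSTree fst snd NoRel S) :
    absDet D S = 1 := by
  refine absDet_eq_one_of_span_int_eq (card_of_isSTree hD hT0 hTt hbasis hS) ?_
  rw [span_image_eq_span_range hD ℤ hS.1, span_int_range_eq_span_single hD hT0 hTt hbasis]

lemma absDet_eq_zero_of_not_isSTree [DecidableEq E] {S : Finset E} (hcard : S.card = n)
    (hS : ¬ IsSTree fst snd NoRel S) : absDet D S = 0 := by
  by_contra h
  exact hS ((isSTree_iff_linearIndepOn_and_span_eq_top hD hT0 hTt hbasis S).mpr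
    ((absDet_ne_zero_iff hcard).mp h))

lemma sum_absDet_smul_eq_sum_isSTree [Fintype E] [DecidableEq E]
    [DecidablePred (IsSTree fst snd NoRel)] (c : E → ℝ) (hc : ∀ e, 0 ≤ c e) :
    ∑ S ∈ Finset.univ.powersetCard n, ENNReal.ofReal (absDet (fun e => c e • D e) S)
      = ∑ T ∈ Finset.univ.filter (IsSTree fst snd NoRel), ENNReal.ofReal (∏ e ∈ T, c e) := by
  rw [← Finset.sum_filter_of_ne (p := IsSTree fst snd NoRel)]
  · have hfilter : (Finset.univ.powersetCard n).filter (IsSTree fst snd NoRel)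
        = Finset.univ.filter (IsSTree fst snd NoRel) := by
      ext S
      simp only [Finset.mem_filter, Finset.mem_powersetCard, Finset.subset_univ, true_and,
        Finset.mem_univ, and_iff_right_iff_imp]
      exact card_of_isSTree hD hT0 hTt hbasis
    rw [hfilter]
    refine Finset.sum_congr rfl fun S hS => ?_
    rw [absDet_smul c hc,
      absDet_eq_one_of_isSTree hD hT0 hTt hbasis (Finset.mem_filter.mp hS).2, mul_one]
  · intro S hS h
    by_contra hS'
    rw [absDet_smul c hc, absDet_eq_zero_of_not_isSTree hD hT0 hTt hbasis
      (Finset.mem_powersetCard.mp hS).2 hS', mul_zero, ENNReal.ofReal_zero] at h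
    exact h rfl

end SpanningRep

end Graph

end CreditNet

open CreditNet

theorem stmt8_general {V E : Type} [Fintype E] [DecidableEq E]
    (fst snd : E → V) (n : ℕ)
    (c : E → ℝ) (hc : ∀ e, 0 ≤ c e)
    (D : E → Fin n → ℝ) (hD : IsSpanningRep fst snd D)
    (T0 : Finset E) (hT0 : IsSTree fst snd NoRel T0)
    (t : Fin n → E)
    (hTt : ∀ e ∈ T0, ∃ i, t i = e)
    (hbasis : ∀ i : Fin n, D (t i) = Pi.single i 1) :
    MeasureTheory.volume (zonotope (fun e : E => c e • D e)) =
      ENNReal.ofReal (treePoly fst snd NoRel c) := by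
  classical
  rw [zonotope_eq_sum_segment, volume_sum_segment, treePoly_eq_sum_filter,
    ENNReal.ofReal_sum_of_nonneg fun T _ => Finset.prod_nonneg fun e _ => hc e]
  exact sum_absDet_smul_eq_sum_isSTree hD.1 hT0.1 hTt hbasis c hc

/-- the volume of the configuration zonotope equals the weighted
spanning tree polynomial evaluated at the capacities. -/
theorem stmt8 {V E : Type} [Fintype V] [Fintype E] [DecidableEq E]
    (fst snd : E → V) (n : ℕ) (hcard : Fintype.card V = n + 1)
    (hconn : ConnVia fst snd Finset.univ NoRel)
    (c : E → ℝ) (hc : ∀ e, 0 ≤ c e)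
    (D : E → Fin n → ℝ) (hD : IsSpanningRep fst snd D)
    (T0 : Finset E) (hT0 : IsSTree fst snd NoRel T0)
    (t : Fin n → E) (ht : Function.Injective t)
    (htT : ∀ i, t i ∈ T0) (hTt : ∀ e ∈ T0, ∃ i, t i = e)
    (hbasis : ∀ i : Fin n, D (t i) = Pi.single i 1) :
    MeasureTheory.volume (zonotope (fun e : E => c e • D e)) =
      ENNReal.ofReal (treePoly fst snd NoRel c) :=
  stmt8_general fst snd n c hc D hD T0 hT0 t hTt hbasis
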